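/- arXiv:math/0605753 — 3 statements merged into one kernel-verified Lean document; each statement's English description precedes it below -/
import Mathlib

section
/- Let X be a simple graph with degrees bounded by d, and let A_m be the operators counting proper paths of length m, regarded as bounded operators on ℓ²(VX). Set α = (d + √(d² + 4d))/2. Then ‖A_m‖ ≤ α^m for all m ≥ 0. -/
open scoped ENNReal


/-- A path `(f 0, f 1, …, f m)` in a simple graph is proper if consecutive vertices are
adjacent and it has no backtracking. -/
def IsProperPath {V : Type*} (G : SimpleGraph V) (m : ℕ) (f : ℕ → V) : Prop :=
  (∀ i, i < m → G.Adj (f i) (f (i + 1))) ∧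
  (∀ i, 1 ≤ i → i + 1 ≤ m → f (i - 1) ≠ f (i + 1))

/-- `pathCount G m x y` = `A_m(x,y)`, the number of proper paths of length `m`
from `x` to `y`. -/
noncomputable def pathCount {V : Type*} (G : SimpleGraph V) (m : ℕ) (x y : V) : ℕ :=
  Nat.card {f : ℕ → V //
    IsProperPath G m f ∧ f 0 = x ∧ f m = y ∧ ∀ i, m ≤ i → f i = y}

namespace Stmt2Aux

variable {V : Type*} [DecidableEq V] (G : SimpleGraph V)

/-- Adjacency paths of length `m` starting at `x`, constant after `m`. -/
def APath (m : ℕ) (x : V) : Set (ℕ → V) :=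
  {f | (∀ i, i < m → G.Adj (f i) (f (i + 1))) ∧ f 0 = x ∧ ∀ i, m ≤ i → f i = f m}

/-- Proper paths from `x` to `y`. -/
def PPath (m : ℕ) (x y : V) : Set (ℕ → V) :=
  {f | IsProperPath G m f ∧ f 0 = x ∧ f m = y ∧ ∀ i, m ≤ i → f i = y}

theorem pathCount_eq (m : ℕ) (x y : V) : pathCount G m x y = Nat.card (PPath G m x y) := rfl

theorem PPath_subset_APath (m : ℕ) (x y : V) : PPath G m x y ⊆ APath G m x := by
  rintro f ⟨⟨hadj, _⟩, h0, hm, htail⟩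
  exact ⟨hadj, h0, fun i hi => by rw [htail i hi, hm]⟩

/-- The covering lemma : adjacency paths from `x` are covered by a finset of size `≤ d^m`. -/
theorem APath_cover (d : ℕ) (hfin : ∀ v, (G.neighborSet v).Finite)
    (hdeg : ∀ v, (G.neighborSet v).ncard ≤ d) (m : ℕ) (x : V) :
    ∃ S : Finset (ℕ → V), APath G m x ⊆ ↑S ∧ S.card ≤ d ^ m := by
  classical
  induction m generalizing x with
  | zero =>
    refine ⟨{fun _ => x}, ?_, by simp⟩
    rintro f ⟨-, h0, htail⟩
    simp only [Finset.coe_singleton, Set.mem_singleton_iff]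
    funext i
    rw [htail i (Nat.zero_le i), htail 0 le_rfl, h0]
  | succ m ih =>
    choose S hS hcard using ih
    set N : Finset V := (hfin x).toFinset with hN
    refine ⟨N.biUnion (fun z => (S z).image (fun g i => if i = 0 then x else g (i - 1))), ?_, ?_⟩
    · rintro f ⟨hadj, h0, htail⟩
      have hz : f 1 ∈ N := by
        simp only [hN, Set.Finite.mem_toFinset, SimpleGraph.mem_neighborSet]
        simpa [h0] using hadj 0 (Nat.succ_pos m)
      have hshift : (fun i => f (i + 1)) ∈ APath G m (f 1) := by
        refine ⟨fun i hi => hadj (i + 1) (by omega), rfl, fun i hi => htail (i + 1) (by omega)⟩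
      have hmem : (fun i => f (i + 1)) ∈ S (f 1) := hS (f 1) hshift
      simp only [Finset.coe_biUnion, Set.mem_iUnion, Finset.mem_coe, Finset.mem_image]
      refine ⟨f 1, hz, (fun i => f (i + 1)), hmem, ?_⟩
      funext i
      rcases i with _ | j
      · simpa using h0.symm
      · simp
    · refine (Finset.card_biUnion_le).trans ?_
      calc ∑ z ∈ N, ((S z).image _).card ≤ ∑ z ∈ N, d ^ m := by
            refine Finset.sum_le_sum fun z _ => (Finset.card_image_le).trans (hcard z)
        _ = N.card * d ^ m := by rw [Finset.sum_const, smul_eq_mul]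
        _ ≤ d * d ^ m := by
            refine Nat.mul_le_mul_right _ ?_
            have := hdeg x
            rwa [Set.ncard_eq_toFinset_card _ (hfin x)] at this
        _ = d ^ (m + 1) := by ring



theorem sum_pathCount_le (d : ℕ) (hfin : ∀ v, (G.neighborSet v).Finite)
    (hdeg : ∀ v, (G.neighborSet v).ncard ≤ d) (m : ℕ) (x : V) (F : Finset V) :
    ∑ y ∈ F, pathCount G m x y ≤ d ^ m := by
  classical
  obtain ⟨S, hS, hcard⟩ := APath_cover G d hfin hdeg m x
  have key : ∀ y, pathCount G m x y = (S.filter (· ∈ PPath G m x y)).card := by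
    intro y
    rw [pathCount_eq, ← Set.ncard_coe_finset, Nat.card_coe_set_eq]
    congr 1
    ext f
    simp only [Finset.coe_filter, Set.mem_setOf_eq, Finset.mem_coe]
    exact ⟨fun h => ⟨hS (PPath_subset_APath G m x y h), h⟩, fun h => h.2⟩
  calc ∑ y ∈ F, pathCount G m x y = ∑ y ∈ F, (S.filter (· ∈ PPath G m x y)).card := by
        simp_rw [key]
    _ = (F.biUnion (fun y => S.filter (· ∈ PPath G m x y))).card := by
        rw [Finset.card_biUnion]
        intro y hy z hz hyz
        refine Finset.disjoint_left.2 ?_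
        intro f hf hg
        simp only [Finset.mem_filter] at hf hg
        exact hyz ((hf.2.2.2.1).symm.trans hg.2.2.2.1)
    _ ≤ S.card := Finset.card_le_card (Finset.biUnion_subset.2 fun y _ => Finset.filter_subset _ _)
    _ ≤ d ^ m := hcard

/-- Reversal of a path. -/
def rev (m : ℕ) (f : ℕ → V) : ℕ → V := fun i => if i ≤ m then f (m - i) else f 0

theorem rev_mem {m : ℕ} {x y : V} {f : ℕ → V} (hf : f ∈ PPath G m x y) :
    rev m f ∈ PPath G m y x := by
  obtain ⟨⟨hadj, hbt⟩, h0, hm, htail⟩ := hf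
  refine ⟨⟨?_, ?_⟩, ?_, ?_, ?_⟩
  · intro i hi
    have e1 : rev m f i = f (m - i) := if_pos hi.le
    have e2 : rev m f (i + 1) = f (m - (i + 1)) := if_pos hi
    rw [e1, e2]
    have h := hadj (m - (i + 1)) (by omega)
    have e3 : m - (i + 1) + 1 = m - i := by omega
    rw [e3] at h
    exact h.symm
  · intro i h1 h2
    have e1 : rev m f (i - 1) = f (m - (i - 1)) := if_pos (by omega)
    have e2 : rev m f (i + 1) = f (m - (i + 1)) := if_pos (by omega)
    rw [e1, e2]
    have h := hbt (m - i) (by omega) (by omega)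
    have e3 : m - i - 1 = m - (i + 1) := by omega
    have e4 : m - i + 1 = m - (i - 1) := by omega
    rw [e3, e4] at h
    exact h.symm
  · have : rev m f 0 = f m := by simp [rev]
    rw [this, hm]
  · have : rev m f m = f 0 := by simp [rev]
    rw [this, h0]
  · intro i hi
    by_cases h : i ≤ m
    · have him : i = m := le_antisymm h hi
      have : rev m f i = f 0 := by simp [rev, him]
      rw [this, h0]
    · have : rev m f i = f 0 := if_neg h
      rw [this, h0]

theorem rev_rev {m : ℕ} {x y : V} {f : ℕ → V} (hf : f ∈ PPath G m x y) :
    rev m (rev m f) = f := by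
  obtain ⟨-, -, hm, htail⟩ := hf
  funext i
  by_cases hi : i ≤ m
  · have e1 : rev m (rev m f) i = rev m f (m - i) := if_pos hi
    have e2 : rev m f (m - i) = f (m - (m - i)) := if_pos (by omega)
    have e3 : m - (m - i) = i := by omega
    rw [e1, e2, e3]
  · have e1 : rev m (rev m f) i = rev m f 0 := if_neg hi
    have e2 : rev m f 0 = f m := by simp [rev]
    rw [e1, e2, hm, htail i (by omega)]

theorem pathCount_symm (m : ℕ) (x y : V) : pathCount G m x y = pathCount G m y x := by
  rw [pathCount_eq, pathCount_eq]
  exact Nat.card_congr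
    ⟨fun f => ⟨rev m f.1, rev_mem G f.2⟩, fun f => ⟨rev m f.1, rev_mem G f.2⟩,
      fun f => Subtype.ext (rev_rev G f.2), fun f => Subtype.ext (rev_rev G f.2)⟩

theorem pathCount_one {x y : V} (h : G.Adj x y) : pathCount G 1 x y = 1 := by
  rw [pathCount_eq]
  have hset : PPath G 1 x y = {fun i => if i = 0 then x else y} := by
    ext f
    simp only [PPath, Set.mem_setOf_eq, Set.mem_singleton_iff]
    constructor
    · rintro ⟨-, h0, -, htail⟩
      funext i
      rcases i with _ | j
      · simpa using h0
      · simpa using htail (j + 1) (by omega)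
    · rintro rfl
      refine ⟨⟨?_, ?_⟩, by simp, by simp [h.ne'], ?_⟩
      · intro i hi
        have : i = 0 := by omega
        subst this
        simpa using h
      · intro i h1 h2
        omega
      · intro i hi
        simp only [if_neg (by omega : ¬ i = 0)]
  rw [hset, Nat.card_coe_set_eq, Set.ncard_singleton]

end Stmt2Aux

/-- Evaluation at a coordinate as a continuous linear map on `ℓ²`. -/
noncomputable def evalCLM' {V : Type*} (y : V) : lp (fun _ : V => ℂ) 2 →L[ℂ] ℂ :=
  LinearMap.mkContinuous
    { toFun := fun f => f y
      map_add' := fun f g => congrFun (lp.coeFn_add f g) y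
      map_smul' := fun c f => congrFun (lp.coeFn_smul c f) y }
    1 (fun f => by
      simpa using lp.norm_apply_le_norm (by norm_num : (2 : ℝ≥0∞) ≠ 0) f y)

@[simp] theorem evalCLM'_apply {V : Type*} (y : V) (f : lp (fun _ : V => ℂ) 2) :
    evalCLM' y f = f y := rfl


/-- If `X` is a countable simple graph with degrees bounded by `d`, and
`T m` is the bounded operator on `ℓ²(VX)` whose matrix entries count proper paths of
length `m`, then `‖T m‖ ≤ αᵐ` with `α = (d + √(d² + 4d))/2`. -/
theorem stmt2 {V : Type*} [Countable V] [DecidableEq V] (G : SimpleGraph V) (d : ℕ)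
    (hdeg : ∀ v, (G.neighborSet v).ncard ≤ d)
    (T : ℕ → (lp (fun _ : V => ℂ) 2 →L[ℂ] lp (fun _ : V => ℂ) 2))
    (hT : ∀ m x y, (T m (lp.single 2 x 1) : ∀ _ : V, ℂ) y = (pathCount G m x y : ℂ))
    (m : ℕ) :
    ‖T m‖ ≤ (((d : ℝ) + Real.sqrt ((d : ℝ) ^ 2 + 4 * d)) / 2) ^ m := by
  classical
  have halpha : (d : ℝ) ≤ ((d : ℝ) + Real.sqrt ((d : ℝ) ^ 2 + 4 * d)) / 2 := by
    have h1 : (d : ℝ) ≤ Real.sqrt ((d : ℝ) ^ 2 + 4 * d) := by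
      have h2 : ((d : ℝ)) ^ 2 ≤ (d : ℝ) ^ 2 + 4 * d := by
        have h3 : (0 : ℝ) ≤ 4 * d := by positivity
        linarith
      calc (d : ℝ) = Real.sqrt ((d : ℝ) ^ 2) := by rw [Real.sqrt_sq (Nat.cast_nonneg d)]
        _ ≤ _ := Real.sqrt_le_sqrt h2
    linarith
  have hd : ((d : ℝ)) ^ m ≤ (((d : ℝ) + Real.sqrt ((d : ℝ) ^ 2 + 4 * d)) / 2) ^ m :=
    pow_le_pow_left₀ (Nat.cast_nonneg d) halpha m
  suffices hkey : ‖T m‖ ≤ ((d : ℝ)) ^ m from hkey.trans hd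
  -- Step A: all neighbor sets are finite
  have hfin : ∀ v, (G.neighborSet v).Finite := by
    intro v
    have hsum : Summable fun y => ‖(T 1 (lp.single 2 v 1) : ∀ _ : V, ℂ) y‖ ^ (2 : ℝ≥0∞).toReal :=
      (lp.memℓp (T 1 (lp.single 2 v 1))).summable (by norm_num)
    have hev := hsum.tendsto_cofinite_zero.eventually (gt_mem_nhds one_pos)
    rw [Filter.eventually_cofinite] at hev
    refine hev.subset ?_
    intro y hy
    simp only [SimpleGraph.mem_neighborSet] at hy
    simp only [Set.mem_setOf_eq, not_lt]
    rw [hT 1 v y, Stmt2Aux.pathCount_one G hy]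
    norm_num
  set C : ℝ := ((d : ℝ)) ^ m with hCdef
  have hC0 : (0 : ℝ) ≤ C := by positivity
  have ha0 : ∀ x y : V, (0 : ℝ) ≤ (pathCount G m x y : ℝ) := fun x y => Nat.cast_nonneg _
  have hrow : ∀ (x : V) (F : Finset V), ∑ y ∈ F, (pathCount G m x y : ℝ) ≤ C := by
    intro x F
    have h := Stmt2Aux.sum_pathCount_le G d hfin hdeg m x F
    calc ∑ y ∈ F, (pathCount G m x y : ℝ) = ((∑ y ∈ F, pathCount G m x y : ℕ) : ℝ) := by push_cast; rfl
      _ ≤ ((d ^ m : ℕ) : ℝ) := Nat.cast_le.2 h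
      _ = C := by push_cast; rfl
  have hcol : ∀ (y : V) (F : Finset V), ∑ x ∈ F, (pathCount G m x y : ℝ) ≤ C := by
    intro y F
    have : ∀ x ∈ F, (pathCount G m x y : ℝ) = (pathCount G m y x : ℝ) := by
      intro x _
      rw [Stmt2Aux.pathCount_symm G m x y]
    rw [Finset.sum_congr rfl this]
    exact hrow y F
  have haC : ∀ x y : V, (pathCount G m x y : ℝ) ≤ C := by
    intro x y
    simpa using hrow x {y}
  refine (T m).opNorm_le_bound hC0 ?_
  intro f
  haveI : Fact (1 ≤ (2 : ℝ≥0∞)) := fact_one_le_two_ennreal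
  have hsingle : HasSum (fun x : V => lp.single 2 x (f x)) f :=
    lp.hasSum_single (by norm_num) f
  have hsmul : ∀ x : V, lp.single (E := fun _ : V => ℂ) 2 x (f x) = f x • lp.single 2 x 1 := by
    intro x
    have h := lp.single_smul (E := fun _ : V => ℂ) (𝕜 := ℂ) 2 x (f x) (1 : ℂ)
    simpa using h
  have hcoord : ∀ y : V,
      HasSum (fun x : V => f x * (pathCount G m x y : ℂ)) ((T m f : ∀ _ : V, ℂ) y) := by
    intro y
    have h1 : HasSum (fun x : V => (T m) (lp.single 2 x (f x))) (T m f) := hsingle.mapL (T m)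
    have h4 := h1.mapL (evalCLM' (V := V) y)
    have h3 : ∀ x : V, evalCLM' (V := V) y ((T m) (lp.single 2 x (f x)))
        = f x * (pathCount G m x y : ℂ) := by
      intro x
      have e1 : (T m) (lp.single 2 x (f x)) = f x • (T m) (lp.single 2 x 1) := by
        rw [hsmul x, map_smul]
      rw [evalCLM'_apply, e1, lp.coeFn_smul, Pi.smul_apply, smul_eq_mul, hT m x y]
    simp only [h3, evalCLM'_apply] at h4
    exact h4
  have hfs : Summable fun x : V => ‖f x‖ ^ 2 := by
    have h := (lp.memℓp f).summable (p := 2) (by norm_num)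
    simpa [Real.rpow_two] using h
  have hfnorm : ‖f‖ ^ 2 = ∑' x, ‖f x‖ ^ 2 := by
    have h := lp.norm_rpow_eq_tsum (p := 2) (by norm_num) f
    simpa [Real.rpow_two] using h
  have hSsum : ∀ y : V, Summable fun x : V => (pathCount G m x y : ℝ) * ‖f x‖ ^ 2 := by
    intro y
    refine Summable.of_nonneg_of_le (fun x => by positivity) (fun x => ?_) (hfs.mul_left C)
    exact mul_le_mul_of_nonneg_right (haC x y) (by positivity)
  set S : V → ℝ := fun y => ∑' x, (pathCount G m x y : ℝ) * ‖f x‖ ^ 2 with hSdef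
  have hb : ∀ y : V, ‖(T m f : ∀ _ : V, ℂ) y‖ ^ 2 ≤ C * S y := by
    intro y
    have hten : Filter.Tendsto
        (fun F : Finset V => ‖∑ x ∈ F, f x * (pathCount G m x y : ℂ)‖ ^ 2)
        Filter.atTop (nhds (‖(T m f : ∀ _ : V, ℂ) y‖ ^ 2)) := ((hcoord y).norm).pow 2
    refine le_of_tendsto hten (Filter.Eventually.of_forall ?_)
    intro F
    have e1 : ‖∑ x ∈ F, f x * (pathCount G m x y : ℂ)‖
        ≤ ∑ x ∈ F, ‖f x‖ * (pathCount G m x y : ℝ) := by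
      refine (norm_sum_le _ _).trans ?_
      refine Finset.sum_le_sum fun x _ => ?_
      rw [norm_mul, Complex.norm_natCast]
    have e2 : (∑ x ∈ F, ‖f x‖ * (pathCount G m x y : ℝ)) ^ 2 ≤
        (∑ x ∈ F, (pathCount G m x y : ℝ)) *
          (∑ x ∈ F, (pathCount G m x y : ℝ) * ‖f x‖ ^ 2) := by
      have hcs := Finset.sum_mul_sq_le_sq_mul_sq F
        (fun x => Real.sqrt (pathCount G m x y))
        (fun x => Real.sqrt (pathCount G m x y) * ‖f x‖)
      have l1 : ∀ x : V, Real.sqrt (pathCount G m x y) *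
          (Real.sqrt (pathCount G m x y) * ‖f x‖) = ‖f x‖ * (pathCount G m x y : ℝ) := by
        intro x
        rw [← mul_assoc, Real.mul_self_sqrt (ha0 x y)]
        ring
      have l2 : ∀ x : V, Real.sqrt (pathCount G m x y) ^ 2 = (pathCount G m x y : ℝ) :=
        fun x => Real.sq_sqrt (ha0 x y)
      have l3 : ∀ x : V, (Real.sqrt (pathCount G m x y) * ‖f x‖) ^ 2
          = (pathCount G m x y : ℝ) * ‖f x‖ ^ 2 := by
        intro x
        rw [mul_pow, l2]
      simp only [l1, l2, l3] at hcs
      exact hcs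
    have e3 : ∑ x ∈ F, (pathCount G m x y : ℝ) ≤ C := hcol y F
    have e4 : ∑ x ∈ F, (pathCount G m x y : ℝ) * ‖f x‖ ^ 2 ≤ S y :=
      Summable.sum_le_tsum F (fun x _ => by positivity) (hSsum y)
    have e5 : (0 : ℝ) ≤ ∑ x ∈ F, (pathCount G m x y : ℝ) * ‖f x‖ ^ 2 := by positivity
    calc ‖∑ x ∈ F, f x * (pathCount G m x y : ℂ)‖ ^ 2
        ≤ (∑ x ∈ F, ‖f x‖ * (pathCount G m x y : ℝ)) ^ 2 :=
          pow_le_pow_left₀ (norm_nonneg _) e1 2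
      _ ≤ (∑ x ∈ F, (pathCount G m x y : ℝ)) *
            (∑ x ∈ F, (pathCount G m x y : ℝ) * ‖f x‖ ^ 2) := e2
      _ ≤ C * S y := mul_le_mul e3 e4 e5 hC0
  have hTnorm : ‖T m f‖ ^ 2 = ∑' y, ‖(T m f : ∀ _ : V, ℂ) y‖ ^ 2 := by
    have h := lp.norm_rpow_eq_tsum (p := 2) (by norm_num) (T m f)
    simpa [Real.rpow_two] using h
  have hTsummable : Summable fun y : V => ‖(T m f : ∀ _ : V, ℂ) y‖ ^ 2 := by
    have h := (lp.memℓp (T m f)).summable (p := 2) (by norm_num)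
    simpa [Real.rpow_two] using h
  have main : ∑' y, ‖(T m f : ∀ _ : V, ℂ) y‖ ^ 2 ≤ C ^ 2 * ‖f‖ ^ 2 := by
    refine Summable.tsum_le_of_sum_le hTsummable ?_
    intro F
    have s1 : ∑ y ∈ F, ‖(T m f : ∀ _ : V, ℂ) y‖ ^ 2 ≤ ∑ y ∈ F, C * S y :=
      Finset.sum_le_sum fun y _ => hb y
    have s3 : ∑ y ∈ F, S y = ∑' x, ∑ y ∈ F, (pathCount G m x y : ℝ) * ‖f x‖ ^ 2 :=
      (Summable.tsum_finsetSum (fun y _ => hSsum y)).symm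
    have s4 : Summable fun x : V => ∑ y ∈ F, (pathCount G m x y : ℝ) * ‖f x‖ ^ 2 :=
      summable_sum fun y _ => hSsum y
    have s5 : ∑' x, ∑ y ∈ F, (pathCount G m x y : ℝ) * ‖f x‖ ^ 2 ≤ ∑' x, C * ‖f x‖ ^ 2 := by
      refine Summable.tsum_le_tsum (fun x => ?_) s4 (hfs.mul_left C)
      rw [← Finset.sum_mul]
      exact mul_le_mul_of_nonneg_right (hrow x F) (by positivity)
    have s6 : ∑' x : V, C * ‖f x‖ ^ 2 = C * ‖f‖ ^ 2 := by rw [tsum_mul_left, ← hfnorm]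
    calc ∑ y ∈ F, ‖(T m f : ∀ _ : V, ℂ) y‖ ^ 2 ≤ ∑ y ∈ F, C * S y := s1
      _ = C * ∑ y ∈ F, S y := by rw [Finset.mul_sum]
      _ ≤ C * (C * ‖f‖ ^ 2) := by
          refine mul_le_mul_of_nonneg_left ?_ hC0
          rw [s3]
          exact s5.trans_eq s6
      _ = C ^ 2 * ‖f‖ ^ 2 := by ring
  have hsq : ‖T m f‖ ^ 2 ≤ (C * ‖f‖) ^ 2 := by
    rw [hTnorm]
    calc ∑' y, ‖(T m f : ∀ _ : V, ℂ) y‖ ^ 2 ≤ C ^ 2 * ‖f‖ ^ 2 := main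
      _ = (C * ‖f‖) ^ 2 := by ring
  have h0 : (0 : ℝ) ≤ C * ‖f‖ := by positivity
  nlinarith [norm_nonneg (T m f), hsq, h0]
end

section
/- Let X be a periodic simple graph with free Γ-action and finite quotient, and let t_m denote the number (counted over a fundamental domain F of vertices) of proper closed paths of length m with a tail starting at a vertex of F. Then t_1 = t_2 = 0 and, for m ≥ 3, t_m = Tr_Γ((Q - I) A_{m-2}) + t_{m-2}. -/
/-- A closed path `(f 0, …, f m = f 0)` has a tail if there is `k` with
`1 ≤ k ≤ ⌊m/2⌋ - 1` such that `f j = f (m - j)` for `j = 1, …, k`. -/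
def HasTail {V : Type*} (m : ℕ) (f : ℕ → V) : Prop :=
  ∃ k, 1 ≤ k ∧ k ≤ m / 2 - 1 ∧ ∀ j, 1 ≤ j → j ≤ k → f j = f (m - j)

/-- `t_m`: the number of proper closed paths of length `m` with a tail, starting at a
vertex of the fundamental domain `F`. -/
noncomputable def tailCount {V : Type*} (G : SimpleGraph V) (F : Finset V) (m : ℕ) : ℕ :=
  ∑ x ∈ F, Nat.card {f : ℕ → V //
    IsProperPath G m f ∧ f 0 = x ∧ f m = x ∧ HasTail m f ∧ ∀ i, m ≤ i → f i = x}

section AuxLemmas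
variable {V : Type*} {G : SimpleGraph V}

def ClosedTailed (G : SimpleGraph V) (m : ℕ) (f : ℕ → V) : Prop :=
  IsProperPath G m f ∧ f m = f 0 ∧ f 1 = f (m - 1) ∧ ∀ i, m ≤ i → f i = f 0

/-- closed proper path at y, eventually constant -/
def PPred (G : SimpleGraph V) (n : ℕ) (y : V) (g : ℕ → V) : Prop :=
  IsProperPath G n g ∧ g 0 = y ∧ g n = y ∧ ∀ i, n ≤ i → g i = y

lemma tail_iff {m : ℕ} {f : ℕ → V} (hm : 3 ≤ m) (hf : IsProperPath G m f) :
    HasTail m f ↔ f 1 = f (m - 1) := by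
  constructor
  · rintro ⟨k, hk1, hk2, hk⟩
    exact hk 1 le_rfl hk1
  · intro h
    rcases eq_or_lt_of_le hm with hm3 | hm4
    · exfalso
      have hadj : G.Adj (f 1) (f 2) := hf.1 1 (by omega)
      have : f 1 = f 2 := by rw [h, ← hm3]
      exact G.ne_of_adj hadj this
    · exact ⟨1, le_rfl, by omega, fun j hj1 hj2 => by
        have : j = 1 := le_antisymm hj2 hj1
        subst this; exact h⟩


lemma finite_chains (hfin : ∀ v, (G.neighborSet v).Finite) (m : ℕ) (x : V) :
    Finite {f : ℕ → V // (∀ i, i < m → G.Adj (f i) (f (i + 1))) ∧ f 0 = x ∧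
      ∀ i, m ≤ i → f i = f m} := by
  induction m with
  | zero =>
    have : Subsingleton {f : ℕ → V // (∀ i, i < 0 → G.Adj (f i) (f (i + 1))) ∧ f 0 = x ∧
        ∀ i, 0 ≤ i → f i = f 0} := by
      constructor
      rintro ⟨f, -, hf0, hf⟩ ⟨g, -, hg0, hg⟩
      ext i
      simp only
      rw [hf i (Nat.zero_le _), hg i (Nat.zero_le _), hf0, hg0]
    infer_instance
  | succ m ih =>
    set T := {f : ℕ → V // (∀ i, i < m → G.Adj (f i) (f (i + 1))) ∧ f 0 = x ∧
      ∀ i, m ≤ i → f i = f m} with hT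
    haveI : Finite T := ih
    have hU : (⋃ g : T, G.neighborSet (g.1 m)).Finite :=
      Set.finite_iUnion fun g => hfin _
    haveI := hU.to_subtype
    have key : ∀ f : {f : ℕ → V // (∀ i, i < m + 1 → G.Adj (f i) (f (i + 1))) ∧ f 0 = x ∧
        ∀ i, m + 1 ≤ i → f i = f (m + 1)},
        (∀ i, i < m → G.Adj (f.1 (min i m)) (f.1 (min (i + 1) m))) ∧ f.1 (min 0 m) = x ∧
        ∀ i, m ≤ i → f.1 (min i m) = f.1 (min m m) := by
      intro f
      refine ⟨fun i hi => ?_, ?_, fun i hi => ?_⟩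
      · rw [min_eq_left hi.le, min_eq_left hi]
        exact f.2.1 i (hi.trans (Nat.lt_succ_self m))
      · rw [min_eq_left (Nat.zero_le m)]; exact f.2.2.1
      · rw [min_eq_right hi, min_self]
    refine Finite.of_injective (β := T × ↥(⋃ g : T, G.neighborSet (g.1 m)))
      (fun f => (⟨fun i => f.1 (min i m), key f⟩,
        ⟨f.1 (m + 1), Set.mem_iUnion.2 ⟨⟨fun i => f.1 (min i m), key f⟩, by
          simp only [SimpleGraph.mem_neighborSet, min_self]
          exact f.2.1 m (Nat.lt_succ_self m)⟩⟩)) ?_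
    intro f g h
    simp only [Prod.mk.injEq, Subtype.mk.injEq] at h
    obtain ⟨h1, h2⟩ := h
    ext i
    rcases le_or_gt i m with hi | hi
    · have := congrFun (congrArg Subtype.val h1) i
      simp only at this
      rwa [min_eq_left hi] at this
    · have hi' : m + 1 ≤ i := hi
      rw [f.2.2.2 i hi', g.2.2.2 i hi', h2]

lemma finite_subpaths (hfin : ∀ v, (G.neighborSet v).Finite) {m : ℕ} {x : V}
    {p : (ℕ → V) → Prop}
    (hp : ∀ f, p f → (∀ i, i < m → G.Adj (f i) (f (i + 1))) ∧ f 0 = x ∧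
      ∀ i, m ≤ i → f i = f m) :
    Finite {f : ℕ → V // p f} := by
  haveI := finite_chains hfin m x
  refine Finite.of_injective
    (β := {f : ℕ → V // (∀ i, i < m → G.Adj (f i) (f (i + 1))) ∧ f 0 = x ∧
      ∀ i, m ≤ i → f i = f m})
    (fun f => ⟨f.1, hp f.1 f.2⟩) ?_
  intro f g h
  simp only [Subtype.mk.injEq] at h
  exact Subtype.ext h


def stepC (G : SimpleGraph V) {n : ℕ} (hn : 1 ≤ n) (y : V) :
    {f : ℕ → V // ClosedTailed G (n + 2) f ∧ f 1 = y} ≃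
      Σ g : {g : ℕ → V // PPred G n y g},
        {x : V // x ∈ G.neighborSet y ∧ x ≠ g.1 1 ∧ x ≠ g.1 (n - 1)} where
  toFun f := ⟨⟨fun i => f.1 (min i n + 1), by
      obtain ⟨⟨⟨hadj, hbt⟩, hclose, htail, hev⟩, h1y⟩ := f.2
      refine ⟨⟨fun i hi => ?_, fun i hi1 hi2 => ?_⟩, ?_, ?_, fun i hi => ?_⟩
      · beta_reduce
        rw [min_eq_left hi.le, min_eq_left hi]
        exact hadj (i + 1) (by omega)
      · beta_reduce
        rw [min_eq_left (by omega : i - 1 ≤ n), min_eq_left hi2,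
          show i - 1 + 1 = i from by omega]
        have h2 := hbt (i + 1) (by omega) (by omega)
        rwa [show i + 1 - 1 = i from by omega] at h2
      · beta_reduce
        rw [min_eq_left (Nat.zero_le n)]
        exact h1y
      · beta_reduce
        rw [min_self]
        rw [show (n : ℕ) + 1 = n + 2 - 1 from by omega, ← htail]
        exact h1y
      · beta_reduce
        rw [min_eq_right hi, show (n : ℕ) + 1 = n + 2 - 1 from by omega, ← htail]
        exact h1y⟩,
    ⟨f.1 0, by
      obtain ⟨⟨⟨hadj, hbt⟩, hclose, htail, hev⟩, h1y⟩ := f.2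
      refine ⟨?_, ?_, ?_⟩
      · have h0 : G.Adj (f.1 0) (f.1 1) := hadj 0 (by omega)
        rw [h1y] at h0
        exact h0.symm
      · show f.1 0 ≠ f.1 (min 1 n + 1)
        rw [min_eq_left hn]
        exact hbt 1 le_rfl (by omega)
      · show f.1 0 ≠ f.1 (min (n - 1) n + 1)
        rw [min_eq_left (by omega : n - 1 ≤ n), show n - 1 + 1 = n from by omega]
        have h2 := hbt (n + 1) (by omega) (by omega)
        rw [show n + 1 - 1 = n from by omega] at h2
        exact fun hcon => h2 ((hclose.trans hcon).symm)⟩⟩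
  invFun p := ⟨fun i => if i = 0 then p.2.1 else if n + 2 ≤ i then p.2.1 else p.1.1 (i - 1), by
    obtain ⟨⟨g, hg⟩, ⟨x, hx⟩⟩ := p
    simp only
    set F : ℕ → V := fun i => if i = 0 then x else if n + 2 ≤ i then x else g (i - 1)
      with hFdef
    have hF0 : F 0 = x := by rw [hFdef]; beta_reduce; rw [if_pos rfl]
    have hFk : ∀ i, 1 ≤ i → i ≤ n + 1 → F i = g (i - 1) := by
      intro i h1 h2
      rw [hFdef]
      beta_reduce
      rw [if_neg (by omega), if_neg (by omega)]
    have hFbig : ∀ i, n + 2 ≤ i → F i = x := by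
      intro i h1
      rw [hFdef]
      beta_reduce
      rw [if_neg (by omega), if_pos h1]
    obtain ⟨⟨gadj, gbt⟩, hg0, hgn, hgev⟩ := hg
    obtain ⟨hxN, hx1, hx2⟩ := hx
    have hx1' : x ≠ g 1 := hx1
    have hx2' : x ≠ g (n - 1) := hx2
    have hAdjxy : G.Adj y x := (G.mem_neighborSet y x).1 hxN
    refine ⟨⟨⟨fun i hi => ?_, fun i hi1 hi2 => ?_⟩, ?_, ?_, fun i hi => ?_⟩, ?_⟩
    · -- adjacency
      have trich : i = 0 ∨ (1 ≤ i ∧ i ≤ n) ∨ i = n + 1 := by omega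
      rcases trich with h | ⟨ha, hb⟩ | h
      · subst h
        show G.Adj (F 0) (F 1)
        rw [hF0, hFk 1 le_rfl (by omega), show (1 : ℕ) - 1 = 0 from rfl, hg0]
        exact hAdjxy.symm
      · rw [hFk i ha (by omega), hFk (i + 1) (by omega) (by omega),
          show i + 1 - 1 = (i - 1) + 1 from by omega]
        exact gadj (i - 1) (by omega)
      · subst h
        show G.Adj (F (n + 1)) (F (n + 2))
        rw [hFk (n + 1) (by omega) le_rfl, hFbig (n + 2) le_rfl,
          show n + 1 - 1 = n from by omega, hgn]
        exact hAdjxy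
    · -- no backtracking
      have trich : i = 1 ∨ (2 ≤ i ∧ i ≤ n) ∨ i = n + 1 := by omega
      rcases trich with h | ⟨ha, hb⟩ | h
      · subst h
        show F 0 ≠ F 2
        rw [hF0, hFk 2 (by omega) (by omega)]
        exact hx1'
      · rw [hFk (i - 1) (by omega) (by omega), hFk (i + 1) (by omega) (by omega),
          show i + 1 - 1 = (i - 1 - 1) + 1 + 1 from by omega]
        have := gbt (i - 1) (by omega) (by omega)
        rwa [show i - 1 - 1 = i - 1 - 1 from rfl, show i - 1 + 1 = i - 1 - 1 + 1 + 1 from by omega]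
          at this
      · subst h
        rw [show n + 1 - 1 = n from by omega, show n + 1 + 1 = n + 2 from rfl,
          hFbig (n + 2) le_rfl, hFk n hn (by omega)]
        exact fun hcon => hx2' hcon.symm
    · show F (n + 2) = F 0
      rw [hFbig (n + 2) le_rfl, hF0]
    · show F 1 = F (n + 2 - 1)
      rw [show n + 2 - 1 = n + 1 from rfl, hFk 1 le_rfl (by omega),
        hFk (n + 1) (by omega) le_rfl, show (1 : ℕ) - 1 = 0 from rfl,
        show n + 1 - 1 = n from by omega, hg0, hgn]
    · rw [hFbig i hi, hF0]
    · show F 1 = y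
      rw [hFk 1 le_rfl (by omega), show (1 : ℕ) - 1 = 0 from rfl, hg0]⟩
  left_inv f := by
    refine Subtype.ext (funext fun i => ?_)
    show (if i = 0 then f.1 0 else if n + 2 ≤ i then f.1 0
      else f.1 (min (i - 1) n + 1)) = f.1 i
    split_ifs with h1 h2
    · rw [h1]
    · exact (f.2.1.2.2.2 i h2).symm
    · exact congrArg f.1 (by omega)
  right_inv p := by
    obtain ⟨⟨g, hg⟩, ⟨x, hx⟩⟩ := p
    refine Sigma.subtype_ext (Subtype.ext (funext fun i => ?_)) ?_
    · show (if min i n + 1 = 0 then x else if n + 2 ≤ min i n + 1 then x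
        else g (min i n + 1 - 1)) = g i
      rw [if_neg (by omega), if_neg (by omega), show min i n + 1 - 1 = min i n from by omega]
      rcases le_or_gt i n with h | h
      · rw [min_eq_left h]
      · rw [min_eq_right h.le, hg.2.2.1, hg.2.2.2 i h.le]
    · show (if (0 : ℕ) = 0 then x else if n + 2 ≤ 0 then x else g (0 - 1)) = x
      exact if_pos rfl

section Shift
variable {Γ : Type*} [Group Γ] [MulAction Γ V]

lemma ClosedTailed.smul {G : SimpleGraph V}
    (hauto : ∀ (g : Γ) (x y : V), G.Adj (g • x) (g • y) ↔ G.Adj x y)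
    (g : Γ) {m : ℕ} {f : ℕ → V} (hf : ClosedTailed G m f) :
    ClosedTailed G m (fun i => g • f i) := by
  obtain ⟨⟨hadj, hbt⟩, hclose, htail, hev⟩ := hf
  refine ⟨⟨fun i hi => (hauto g _ _).2 (hadj i hi), fun i h1 h2 hcon => ?_⟩,
    congrArg (g • ·) hclose, congrArg (g • ·) htail, fun i hi => congrArg (g • ·) (hev i hi)⟩
  exact hbt i h1 h2 (MulAction.injective g hcon)

lemma shift_card {G : SimpleGraph V}
    (hauto : ∀ (g : Γ) (x y : V), G.Adj (g • x) (g • y) ↔ G.Adj x y)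
    (hfree : ∀ (g : Γ) (x : V), g • x = x → g = 1)
    (F : Finset V) (hF : ∀ x : V, ∃! y, y ∈ F ∧ ∃ g : Γ, g • y = x) (m : ℕ) :
    Nat.card {f : ℕ → V // ClosedTailed G m f ∧ f 0 ∈ F} =
      Nat.card {f : ℕ → V // ClosedTailed G m f ∧ f 1 ∈ F} := by
  classical
  have h1 : ∀ v : V, ∃ y, ∃ g : Γ, y ∈ F ∧ g • y = v := by
    intro v
    obtain ⟨y, ⟨hy, g, hg⟩, -⟩ := hF v
    exact ⟨y, g, hy, hg⟩
  choose rep sh hrepF hsh using h1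
  have huniq : ∀ (v y : V) (g : Γ), y ∈ F → g • y = v → y = rep v ∧ g = sh v := by
    intro v y g hy hgv
    have hy' : y = rep v := by
      obtain ⟨z, hz, hun⟩ := hF v
      rw [hun y ⟨hy, g, hgv⟩, hun (rep v) ⟨hrepF v, sh v, hsh v⟩]
    refine ⟨hy', ?_⟩
    have h2 : ((sh v)⁻¹ * g) • y = y := by
      rw [mul_smul, hgv, inv_smul_eq_iff, hy', hsh v]
    have h3 := hfree _ _ h2
    exact (inv_mul_eq_one.1 h3).symm
  refine Nat.card_congr ⟨fun f => ⟨fun i => (sh (f.1 1))⁻¹ • f.1 i, ?_, ?_⟩,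
    fun f => ⟨fun i => (sh (f.1 0))⁻¹ • f.1 i, ?_, ?_⟩, ?_, ?_⟩
  · exact ClosedTailed.smul hauto _ f.2.1
  · show (sh (f.1 1))⁻¹ • f.1 1 ∈ F
    rw [show (sh (f.1 1))⁻¹ • f.1 1 = rep (f.1 1) from by
      rw [inv_smul_eq_iff]; exact (hsh _).symm]
    exact hrepF _
  · exact ClosedTailed.smul hauto _ f.2.1
  · show (sh (f.1 0))⁻¹ • f.1 0 ∈ F
    rw [show (sh (f.1 0))⁻¹ • f.1 0 = rep (f.1 0) from by
      rw [inv_smul_eq_iff]; exact (hsh _).symm]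
    exact hrepF _
  · -- left inverse
    intro f
    refine Subtype.ext (funext fun i => ?_)
    show (sh ((sh (f.1 1))⁻¹ • f.1 0))⁻¹ • ((sh (f.1 1))⁻¹ • f.1 i) = f.1 i
    have hkey : sh ((sh (f.1 1))⁻¹ • f.1 0) = (sh (f.1 1))⁻¹ :=
      ((huniq ((sh (f.1 1))⁻¹ • f.1 0) (f.1 0) ((sh (f.1 1))⁻¹) f.2.2 rfl).2).symm
    rw [hkey, inv_inv, smul_smul, mul_inv_cancel, one_smul]
  · -- right inverse
    intro f
    refine Subtype.ext (funext fun i => ?_)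
    show (sh ((sh (f.1 0))⁻¹ • f.1 1))⁻¹ • ((sh (f.1 0))⁻¹ • f.1 i) = f.1 i
    have hkey : sh ((sh (f.1 0))⁻¹ • f.1 1) = (sh (f.1 0))⁻¹ :=
      ((huniq ((sh (f.1 0))⁻¹ • f.1 1) (f.1 1) ((sh (f.1 0))⁻¹) f.2.2 rfl).2).symm
    rw [hkey, inv_inv, smul_smul, mul_inv_cancel, one_smul]

end Shift

def sigmaFiber {α : Type*} (q : α → Prop) (F : Finset V) (ev : α → V) :
    {f : α // q f ∧ ev f ∈ F} ≃ Σ x : F, {f : α // q f ∧ ev f = x} where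
  toFun f := ⟨⟨ev f.1, f.2.2⟩, ⟨f.1, f.2.1, rfl⟩⟩
  invFun p := ⟨p.2.1, p.2.2.1, by rw [p.2.2.2]; exact p.1.2⟩
  left_inv f := rfl
  right_inv p := Sigma.subtype_ext (Subtype.ext p.2.2.2) rfl

lemma nat_card_sigma {ι : Type*} [Fintype ι] (β : ι → Type*) [∀ i, Finite (β i)] :
    Nat.card (Σ i, β i) = ∑ i, Nat.card (β i) := by
  letI : ∀ i, Fintype (β i) := fun i => Fintype.ofFinite _
  simp [Nat.card_eq_fintype_card, Fintype.card_sigma]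

lemma finite_nbhd_sub {G : SimpleGraph V} (hfin : ∀ v, (G.neighborSet v).Finite) (y : V)
    (q : V → Prop) : Finite {x : V // x ∈ G.neighborSet y ∧ q x} := by
  haveI := (hfin y).to_subtype
  exact Finite.of_injective (β := ↥(G.neighborSet y)) (fun a => ⟨a.1, a.2.1⟩)
    (fun a b h => Subtype.ext (by simpa [Subtype.ext_iff] using h))

lemma finite_ppred {G : SimpleGraph V} (hfin : ∀ v, (G.neighborSet v).Finite) (n : ℕ) (y : V) :
    Finite {g : ℕ → V // PPred G n y g} := by
  refine finite_subpaths hfin (m := n) (x := y) fun g hg => ⟨hg.1.1, hg.2.1, fun i hi => ?_⟩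
  rw [hg.2.2.2 i hi, hg.2.2.2 n le_rfl]

lemma per_y {G : SimpleGraph V} (hfin : ∀ v, (G.neighborSet v).Finite) {n : ℕ}
    (hn : 1 ≤ n) (y : V) :
    (Nat.card {f : ℕ → V // ClosedTailed G (n + 2) f ∧ f 1 = y} : ℤ)
      = (((G.neighborSet y).ncard : ℤ) - 2) *
          (Nat.card {g : ℕ → V // PPred G n y g} : ℤ)
        + (Nat.card {g : ℕ → V // PPred G n y g ∧ g 1 = g (n - 1)} : ℤ) := by
  classical
  haveI : Finite {g : ℕ → V // PPred G n y g} := finite_ppred hfin n y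
  letI : Fintype {g : ℕ → V // PPred G n y g} := Fintype.ofFinite _
  haveI hXfin : ∀ g : {g : ℕ → V // PPred G n y g},
      Finite {x : V // x ∈ G.neighborSet y ∧ x ≠ g.1 1 ∧ x ≠ g.1 (n - 1)} :=
    fun g => finite_nbhd_sub hfin y _
  rw [Nat.card_congr (stepC G hn y), nat_card_sigma]
  have hmem : ∀ g : {g : ℕ → V // PPred G n y g},
      g.1 1 ∈ G.neighborSet y ∧ g.1 (n - 1) ∈ G.neighborSet y := by
    intro g
    obtain ⟨⟨gadj, gbt⟩, hg0, hgn, hgev⟩ := g.2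
    constructor
    · have h := gadj 0 (by omega)
      rw [hg0] at h
      exact h
    · have h := gadj (n - 1) (by omega)
      rw [show n - 1 + 1 = n from by omega, hgn] at h
      exact h.symm
  have hsub : ∀ g : {g : ℕ → V // PPred G n y g},
      ({g.1 1, g.1 (n - 1)} : Set V) ⊆ G.neighborSet y := by
    intro g
    rw [Set.insert_subset_iff, Set.singleton_subset_iff]
    exact hmem g
  have hcard : ∀ g : {g : ℕ → V // PPred G n y g},
      (Nat.card {x : V // x ∈ G.neighborSet y ∧ x ≠ g.1 1 ∧ x ≠ g.1 (n - 1)} : ℤ)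
        = ((G.neighborSet y).ncard : ℤ) - 2
          + (if g.1 1 = g.1 (n - 1) then 1 else 0) := by
    intro g
    have e : Nat.card {x : V // x ∈ G.neighborSet y ∧ x ≠ g.1 1 ∧ x ≠ g.1 (n - 1)}
        = (G.neighborSet y \ {g.1 1, g.1 (n - 1)} : Set V).ncard := by
      rw [← Nat.card_coe_set_eq]
      refine Nat.card_congr (Equiv.subtypeEquivRight ?_)
      intro x
      simp only [Set.mem_diff, Set.mem_insert_iff, Set.mem_singleton_iff]
      tauto
    rw [e, Set.ncard_diff (hsub g) (Set.toFinite _)]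
    split_ifs with h
    · rw [h, Set.pair_eq_singleton, Set.ncard_singleton]
      have hle : 1 ≤ (G.neighborSet y).ncard :=
        (Set.ncard_pos (hfin y)).2 ⟨_, (hmem g).1⟩
      rw [Nat.cast_sub hle]
      push_cast
      ring
    · rw [Set.ncard_pair h]
      have hle : 2 ≤ (G.neighborSet y).ncard := by
        have h2 := Set.ncard_le_ncard (hsub g) (hfin y)
        rwa [Set.ncard_pair h] at h2
      rw [Nat.cast_sub hle]
      push_cast
      ring
  push_cast
  rw [Finset.sum_congr rfl (fun g _ => hcard g), Finset.sum_add_distrib,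
    Finset.sum_const, Finset.sum_boole]
  have h2 : (Finset.filter (fun x : {g : ℕ → V // PPred G n y g} => x.1 1 = x.1 (n - 1))
      Finset.univ).card = Nat.card {g : ℕ → V // PPred G n y g ∧ g 1 = g (n - 1)} := by
    rw [← Fintype.card_subtype, ← Nat.card_eq_fintype_card]
    exact Nat.card_congr (Equiv.subtypeSubtypeEquivSubtypeInter (PPred G n y)
      (fun g => g 1 = g (n - 1)))
  rw [h2, nsmul_eq_mul, Finset.card_univ, ← Nat.card_eq_fintype_card]
  ring

lemma card_tailTy {G : SimpleGraph V} {m : ℕ} (hm : 3 ≤ m) (x : V) :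
    Nat.card {f : ℕ → V // IsProperPath G m f ∧ f 0 = x ∧ f m = x ∧ HasTail m f ∧
        ∀ i, m ≤ i → f i = x}
      = Nat.card {f : ℕ → V // ClosedTailed G m f ∧ f 0 = x} := by
  refine Nat.card_congr (Equiv.subtypeEquivRight ?_)
  intro f
  constructor
  · rintro ⟨hp, h0, hmx, ht, hev⟩
    exact ⟨⟨hp, hmx.trans h0.symm, (tail_iff hm hp).1 ht,
      fun i hi => (hev i hi).trans h0.symm⟩, h0⟩
  · rintro ⟨⟨hp, hc, htl, hev⟩, h0⟩
    exact ⟨hp, h0, hc.trans h0, (tail_iff hm hp).2 htl, fun i hi => (hev i hi).trans h0⟩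

lemma card_tail_eq {G : SimpleGraph V} {n : ℕ} (hn : 1 ≤ n) (y : V) :
    Nat.card {g : ℕ → V // PPred G n y g ∧ g 1 = g (n - 1)}
      = Nat.card {f : ℕ → V // IsProperPath G n f ∧ f 0 = y ∧ f n = y ∧ HasTail n f ∧
          ∀ i, n ≤ i → f i = y} := by
  rcases lt_or_ge n 3 with h3 | h3
  · haveI e1 : IsEmpty {g : ℕ → V // PPred G n y g ∧ g 1 = g (n - 1)} := by
      constructor
      rintro ⟨g, ⟨⟨gadj, gbt⟩, hg0, hgn, hgev⟩, -⟩
      rcases (by omega : n = 1 ∨ n = 2) with h | h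
      · subst h
        have hadj := gadj 0 (by omega)
        rw [hg0, hgev 1 le_rfl] at hadj
        exact G.loopless.irrefl y hadj
      · subst h
        have hbt := gbt 1 le_rfl (by omega)
        rw [show (1 : ℕ) - 1 = 0 from rfl, hg0, hgev 2 le_rfl] at hbt
        exact hbt rfl
    haveI e2 : IsEmpty {f : ℕ → V // IsProperPath G n f ∧ f 0 = y ∧ f n = y ∧ HasTail n f ∧
        ∀ i, n ≤ i → f i = y} := by
      constructor
      rintro ⟨f, -, -, -, ⟨k, hk1, hk2, -⟩, -⟩
      omega
    rw [Nat.card_of_isEmpty, Nat.card_of_isEmpty]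
  · refine Nat.card_congr (Equiv.subtypeEquivRight ?_)
    intro f
    constructor
    · rintro ⟨⟨hp, h0, hnn, hev⟩, ht⟩
      exact ⟨hp, h0, hnn, (tail_iff h3 hp).2 ht, hev⟩
    · rintro ⟨hp, h0, hnn, ht, hev⟩
      exact ⟨⟨hp, h0, hnn, hev⟩, (tail_iff h3 hp).1 ht⟩

lemma sum_card {α : Type*} (q : α → Prop) (F : Finset V) (ev : α → V)
    (h : ∀ x : V, Finite {f : α // q f ∧ ev f = x}) :
    ∑ x ∈ F, Nat.card {f : α // q f ∧ ev f = x} = Nat.card {f : α // q f ∧ ev f ∈ F} := by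
  haveI : ∀ x : F, Finite {f : α // q f ∧ ev f = x} := fun x => h x
  rw [Nat.card_congr (sigmaFiber q F ev), nat_card_sigma]
  exact (Finset.sum_coe_sort F (fun x => Nat.card {f : α // q f ∧ ev f = x})).symm


end AuxLemmas

/-- For a periodic simple graph with free `Γ`-action and finite quotient,
`t₁ = t₂ = 0` and for `m ≥ 3`, `t_m = Tr_Γ((Q - I) A_{m-2}) + t_{m-2}`, where
`Tr_Γ((Q-I)A_{m-2}) = ∑_{x ∈ F} (deg x - 2)·A_{m-2}(x,x)`. -/
theorem stmt4 {V : Type*} {Γ : Type*} [Group Γ] [MulAction Γ V]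
    (G : SimpleGraph V) (d : ℕ)
    (hfin : ∀ v, (G.neighborSet v).Finite) (hdeg : ∀ v, (G.neighborSet v).ncard ≤ d)
    (hauto : ∀ (g : Γ) (x y : V), G.Adj (g • x) (g • y) ↔ G.Adj x y)
    (hfree : ∀ (g : Γ) (x : V), g • x = x → g = 1)
    (F : Finset V) (hF : ∀ x : V, ∃! y, y ∈ F ∧ ∃ g : Γ, g • y = x) :
    tailCount G F 1 = 0 ∧ tailCount G F 2 = 0 ∧
    ∀ m, 3 ≤ m → (tailCount G F m : ℤ) =
      (∑ x ∈ F, (((G.neighborSet x).ncard : ℤ) - 2) * (pathCount G (m - 2) x x : ℤ))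
        + (tailCount G F (m - 2) : ℤ) := by
  classical
  have hempty : ∀ m : ℕ, m ≤ 3 → ∀ x : V,
      Nat.card {f : ℕ → V // IsProperPath G m f ∧ f 0 = x ∧ f m = x ∧ HasTail m f ∧
        ∀ i, m ≤ i → f i = x} = 0 := by
    intro m hm x
    haveI : IsEmpty {f : ℕ → V // IsProperPath G m f ∧ f 0 = x ∧ f m = x ∧ HasTail m f ∧
        ∀ i, m ≤ i → f i = x} := by
      constructor
      rintro ⟨f, -, -, -, ⟨k, hk1, hk2, -⟩, -⟩
      omega
    exact Nat.card_of_isEmpty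
  refine ⟨Finset.sum_eq_zero fun x _ => hempty 1 (by omega) x,
    Finset.sum_eq_zero fun x _ => hempty 2 (by omega) x, fun m hm => ?_⟩
  obtain ⟨n, rfl⟩ : ∃ n, m = n + 2 := ⟨m - 2, by omega⟩
  have hn : 1 ≤ n := by omega
  have hmm : n + 2 - 2 = n := rfl
  rw [hmm]
  -- finiteness of fibers
  have hfib0 : ∀ x : V, Finite {f : ℕ → V // ClosedTailed G (n + 2) f ∧ f 0 = x} := by
    intro x
    refine finite_subpaths hfin (m := n + 2) (x := x) fun f hf =>
      ⟨hf.1.1.1, hf.2, fun i hi => ?_⟩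
    rw [hf.1.2.1]
    exact hf.1.2.2.2 i hi
  have hfib1 : ∀ y : V, Finite {f : ℕ → V // ClosedTailed G (n + 2) f ∧ f 1 = y} := by
    intro y
    haveI : Finite {g : ℕ → V // PPred G n y g} := finite_ppred hfin n y
    haveI : ∀ g : {g : ℕ → V // PPred G n y g},
        Finite {x : V // x ∈ G.neighborSet y ∧ x ≠ g.1 1 ∧ x ≠ g.1 (n - 1)} :=
      fun g => finite_nbhd_sub hfin y _
    exact Finite.of_equiv _ (stepC G hn y).symm
  have e1 : tailCount G F (n + 2) = Nat.card {f : ℕ → V // ClosedTailed G (n + 2) f ∧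
      f 0 ∈ F} := by
    unfold tailCount
    rw [← sum_card (ClosedTailed G (n + 2)) F (fun f => f 0) hfib0]
    exact Finset.sum_congr rfl fun x _ => card_tailTy (by omega) x
  have e2 := shift_card (Γ := Γ) hauto hfree F hF (n + 2)
  have e3 : Nat.card {f : ℕ → V // ClosedTailed G (n + 2) f ∧ f 1 ∈ F}
      = ∑ y ∈ F, Nat.card {f : ℕ → V // ClosedTailed G (n + 2) f ∧ f 1 = y} :=
    (sum_card (ClosedTailed G (n + 2)) F (fun f => f 1) hfib1).symm
  rw [e1, e2, e3]
  push_cast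
  have e4 : ∑ y ∈ F, (Nat.card {f : ℕ → V // ClosedTailed G (n + 2) f ∧ f 1 = y} : ℤ)
      = ∑ y ∈ F, ((((G.neighborSet y).ncard : ℤ) - 2) *
          (Nat.card {g : ℕ → V // PPred G n y g} : ℤ)
        + (Nat.card {g : ℕ → V // PPred G n y g ∧ g 1 = g (n - 1)} : ℤ)) :=
    Finset.sum_congr rfl fun y _ => per_y hfin hn y
  rw [e4]
  rw [Finset.sum_add_distrib]
  congr 1
  · unfold tailCount
    push_cast
    exact Finset.sum_congr rfl fun y _ => congrArg _ (card_tail_eq hn y)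
end

section
/- Let X be a simple graph with degrees bounded by d, A its adjacency operator on ℓ²(VX), Q = diag(deg(v)-1), and A_m the proper path counting operators. Then for complex u with |u| < 1/α, where α = (d+√(d²+4d))/2, the series Σ_{m≥0} A_m u^m converges in operator norm and (Σ_{m≥0} A_m u^m)(I - Au + Qu²) = (1 - u²) I. -/
private lemma auxTendsto {E : Type*} [NormedAddCommGroup E] (g : ℕ → E) (C r : ℝ)
    (hr0 : 0 ≤ r) (hr : r < 1) (h : ∀ n, ‖g n‖ ≤ C * r ^ n) :
    Filter.Tendsto g Filter.atTop (nhds 0) :=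
  squeeze_zero_norm h (by
    simpa using (tendsto_pow_atTop_nhds_zero_of_lt_one hr0 hr).const_mul C)

set_option maxHeartbeats 1000000
set_option synthInstance.maxHeartbeats 400000

/-- Let `X` be a simple graph with degrees bounded by `d`, `A` its
adjacency operator on `ℓ²(VX)`, `Q` the diagonal operator `diag(deg v - 1)` and `T m`
the proper-path counting operators (characterized by `T 0 = I`, `T 1 = A`,
`T 2 = A² - Q - I`, `T m = T (m-1) A - T (m-2) Q` for `m ≥ 3`, with `‖T m‖ ≤ αᵐ`).
Then for `|u| < 1/α`, `α = (d+√(d²+4d))/2`, the series `∑ A_m uᵐ` converges in operator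
norm and `(∑_{m≥0} A_m uᵐ)(I - Au + Qu²) = (1 - u²) I`. -/
theorem stmt10 {V : Type*} [Countable V] [DecidableEq V] (G : SimpleGraph V) [DecidableRel G.Adj] (d : ℕ)
    (hdeg : ∀ v, (G.neighborSet v).ncard ≤ d)
    (A Q : lp (fun _ : V => ℂ) 2 →L[ℂ] lp (fun _ : V => ℂ) 2)
    (hA : ∀ x y, (A (lp.single 2 x 1) : ∀ _ : V, ℂ) y = if G.Adj x y then 1 else 0)
    (hQ : ∀ x y, (Q (lp.single 2 x 1) : ∀ _ : V, ℂ) y =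
      if x = y then ((G.neighborSet x).ncard : ℂ) - 1 else 0)
    (T : ℕ → (lp (fun _ : V => ℂ) 2 →L[ℂ] lp (fun _ : V => ℂ) 2))
    (hT0 : T 0 = 1) (hT1 : T 1 = A) (hT2 : T 2 = A * A - Q - 1)
    (hTrec : ∀ m, 3 ≤ m → T m = T (m - 1) * A - T (m - 2) * Q)
    (hTbd : ∀ m, ‖T m‖ ≤ (((d : ℝ) + Real.sqrt ((d : ℝ) ^ 2 + 4 * d)) / 2) ^ m)
    (u : ℂ) (hu : ‖u‖ < 1 / (((d : ℝ) + Real.sqrt ((d : ℝ) ^ 2 + 4 * d)) / 2)) :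
    Summable (fun m : ℕ => u ^ m • T m) ∧
    (∑' m : ℕ, u ^ m • T m) * (1 - u • A + u ^ 2 • Q) = (1 - u ^ 2) • 1 := by
  set α : ℝ := ((d : ℝ) + Real.sqrt ((d : ℝ) ^ 2 + 4 * d)) / 2 with hαdef
  -- dispose of the degenerate case `d = 0`
  rcases Nat.eq_zero_or_pos d with hd | hd
  · subst hd
    have : α = 0 := by simp [hαdef]
    rw [this] at hu
    simp at hu
    exact absurd hu (not_lt.mpr (norm_nonneg u))
  -- now `d ≥ 1`, so `α ≥ 1`
  have hsq : (d : ℝ) ≤ Real.sqrt ((d : ℝ) ^ 2 + 4 * d) := by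
    have h1 : Real.sqrt ((d : ℝ) ^ 2) ≤ Real.sqrt ((d : ℝ) ^ 2 + 4 * d) :=
      Real.sqrt_le_sqrt (by nlinarith [Nat.cast_nonneg (α := ℝ) d])
    rwa [Real.sqrt_sq (by positivity)] at h1
  have hα1 : (1 : ℝ) ≤ α := by
    have : (1 : ℝ) ≤ (d : ℝ) := by exact_mod_cast hd
    rw [hαdef]; linarith
  have hα0 : (0 : ℝ) < α := lt_of_lt_of_le one_pos hα1
  have hu1 : ‖u‖ < 1 := lt_of_lt_of_le hu (by
    rw [div_le_one hα0] at *; linarith)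
  set r : ℝ := ‖u‖ * α with hrdef
  have hr0 : 0 ≤ r := mul_nonneg (norm_nonneg u) hα0.le
  have hr1 : r < 1 := by
    rw [hrdef]
    calc ‖u‖ * α < (1 / α) * α := by
          exact mul_lt_mul_of_pos_right hu hα0
      _ = 1 := by field_simp
  -- Summability
  have hbound : ∀ m : ℕ, ‖u ^ m • T m‖ ≤ r ^ m := by
    intro m
    rw [norm_smul (u ^ m) (T m), norm_pow, hrdef, mul_pow]
    exact mul_le_mul_of_nonneg_left (hTbd m) (by positivity)
  have hS : Summable (fun m : ℕ => u ^ m • T m) :=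
    Summable.of_norm_bounded (summable_geometric_of_lt_one hr0 hr1) hbound
  refine ⟨hS, ?_⟩
  set M : lp (fun _ : V => ℂ) 2 →L[ℂ] lp (fun _ : V => ℂ) 2 :=
    1 - u • A + u ^ 2 • Q with hMdef
  set C : lp (fun _ : V => ℂ) 2 →L[ℂ] lp (fun _ : V => ℂ) 2 := (1 - u ^ 2) • 1 with hCdef
  set E : ℕ → (lp (fun _ : V => ℂ) 2 →L[ℂ] lp (fun _ : V => ℂ) 2) :=
    fun N => u ^ (N + 3) • (T (N + 1) * Q) + u ^ (N + 4) • (T (N + 2) * Q)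
      - u ^ (N + 3) • (T (N + 2) * A) with hEdef
  -- partial sum formula
  have key : ∀ N : ℕ, ∑ m ∈ Finset.range (N + 3), (u ^ m • T m) * M = C + E N := by
    intro N
    induction N with
    | zero =>
      simp only [Finset.sum_range_succ, Finset.sum_range_zero, hEdef, hMdef, hCdef,
        hT0, hT1, hT2]
      simp only [mul_sub, sub_mul, mul_add, add_mul, mul_one, one_mul,
        smul_mul_assoc, mul_smul_comm, smul_smul, smul_sub, smul_add, mul_assoc]
      match_scalars <;> ring
    | succ N ih =>
      rw [show N + 1 + 3 = (N + 3) + 1 by ring, Finset.sum_range_succ, ih]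
      have h3 : T (N + 3) = T (N + 2) * A - T (N + 1) * Q := by
        have := hTrec (N + 3) (by omega)
        simpa using this
      simp only [hEdef, hMdef, show N + 1 + 1 = N + 2 by ring, show N + 1 + 2 = N + 3 by ring,
        show N + 1 + 4 = N + 5 by ring, show N + 1 + 3 = N + 4 by ring, h3]
      simp only [mul_sub, sub_mul, mul_add, add_mul, mul_one, one_mul,
        smul_mul_assoc, mul_smul_comm, smul_smul, smul_sub, smul_add, mul_assoc]
      match_scalars <;> ring
  -- the boundary terms tend to zero
  have keyT : ∀ (j k : ℕ), j ≤ k →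
      ∀ B : lp (fun _ : V => ℂ) 2 →L[ℂ] lp (fun _ : V => ℂ) 2,
      Filter.Tendsto (fun N => u ^ (N + k) • (T (N + j) * B)) Filter.atTop (nhds 0) := by
    intro j k hjk B
    refine auxTendsto _ ‖B‖ r hr0 hr1 (fun n => ?_)
    rw [norm_smul (u ^ (n + k)) (T (n + j) * B), norm_pow]
    calc ‖u‖ ^ (n + k) * ‖T (n + j) * B‖
        ≤ ‖u‖ ^ (n + j) * (α ^ (n + j) * ‖B‖) := by
          refine mul_le_mul (pow_le_pow_of_le_one (norm_nonneg u) hu1.le (by omega))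
            (le_trans (norm_mul_le _ _)
              (mul_le_mul_of_nonneg_right (hTbd _) (norm_nonneg B))) (norm_nonneg _)
            (by positivity)
      _ = ‖B‖ * r ^ (n + j) := by rw [hrdef, mul_pow]; ring
      _ ≤ ‖B‖ * r ^ n := by
          exact mul_le_mul_of_nonneg_left
            (pow_le_pow_of_le_one hr0 hr1.le (by omega)) (norm_nonneg B)
  have hE0 : Filter.Tendsto E Filter.atTop (nhds 0) := by
    have h1 := keyT 1 3 (by omega) Q
    have h2 := keyT 2 4 (by omega) Q
    have h3 := keyT 2 3 (by omega) A
    have := (h1.add h2).sub h3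
    simpa [hEdef] using this
  -- pass to the limit
  have hlim1 : Filter.Tendsto (fun N => (∑ m ∈ Finset.range (N + 3), u ^ m • T m) * M)
      Filter.atTop (nhds ((∑' m : ℕ, u ^ m • T m) * M)) := by
    exact (Filter.Tendsto.comp hS.hasSum.tendsto_sum_nat
      (Filter.tendsto_add_atTop_nat 3)).mul tendsto_const_nhds
  have heq : (fun N => (∑ m ∈ Finset.range (N + 3), u ^ m • T m) * M)
      = fun N => C + E N := by
    funext N
    rw [Finset.sum_mul]
    exact key N
  rw [heq] at hlim1
  have hlim2 : Filter.Tendsto (fun N => C + E N) Filter.atTop (nhds (C + 0)) :=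
    Filter.Tendsto.add (tendsto_const_nhds (α := ℕ)) hE0
  have := tendsto_nhds_unique hlim1 hlim2
  rw [add_zero] at this
  exact this
end
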